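/- For p = (0,0,R) on the sphere x² + y² + z² = R² centered at the origin, and neighbors q_θ = (r cos θ, r sin θ, z₀) with r² + z₀² = R², all at chordal distance k from p, one has z₀ = R - k²/(2R), the best-fit plane is z = z₀, the projection h of p onto it is (0,0,z₀), and ‖h - p‖ = k²/(2R); hence (1/(2k²))‖h - p‖ = 1/(4R). -/

import Mathlib

/-- Consistency of the plane-fitting curvature approximation on a sphere of radius `R`. -/
theorem sphere_curvature_consistency
    (R k r z₀ : ℝ) (hR : 0 < R) (hk0 : 0 < k) (hk2 : k < 2 * R) (hr : 0 < r)
    (hsphere : r ^ 2 + z₀ ^ 2 = R ^ 2)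
    (p : EuclideanSpace ℝ (Fin 3))
    (hp : p = (WithLp.equiv 2 (Fin 3 → ℝ)).symm ![0, 0, R])
    (q : ℝ → EuclideanSpace ℝ (Fin 3))
    (hq : ∀ θ : ℝ, q θ = (WithLp.equiv 2 (Fin 3 → ℝ)).symm ![r * Real.cos θ, r * Real.sin θ, z₀])
    (hdist : ∀ θ : ℝ, dist (q θ) p = k)
    (h : EuclideanSpace ℝ (Fin 3))
    (hh : h = (WithLp.equiv 2 (Fin 3 → ℝ)).symm ![0, 0, z₀])
    (n' : EuclideanSpace ℝ (Fin 3))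
    (hn' : n' = (WithLp.equiv 2 (Fin 3 → ℝ)).symm ![0, 0, 1]) :
    z₀ = R - k ^ 2 / (2 * R) ∧
    (∀ θ : ℝ, (inner ℝ (q θ) n' : ℝ) + (-z₀) = 0) ∧
    h = p - ((inner ℝ p n' : ℝ) + (-z₀)) • n' ∧
    ‖h - p‖ = k ^ 2 / (2 * R) ∧
    ((1 : ℝ) / (2 * k ^ 2)) * ‖h - p‖ = 1 / (4 * R) := by
  have hd0 := hdist 0
  rw [hq 0, hp, EuclideanSpace.dist_eq] at hd0
  simp only [WithLp.equiv_symm_apply, PiLp.toLp_apply, Fin.sum_univ_three, Matrix.cons_val_zero,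
    Matrix.cons_val_one, Matrix.head_cons, Matrix.cons_val_two, Matrix.tail_cons,
    Real.dist_eq, Real.cos_zero, Real.sin_zero, mul_one, mul_zero, sub_zero,
    zero_sub, abs_zero] at hd0
  have h2 : k ^ 2 = |r| ^ 2 + (0:ℝ) ^ 2 + |z₀ - R| ^ 2 := by
    rw [← hd0, Real.sq_sqrt (by positivity)]
  rw [sq_abs, sq_abs] at h2
  have hk2' : k ^ 2 = 2 * R * (R - z₀) := by nlinarith [hsphere]
  have hz₀ : z₀ = R - k ^ 2 / (2 * R) := by field_simp [hk2']; linear_combination hk2'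
  have hRz : 0 < R - z₀ := by nlinarith
  have hinner_p : (inner ℝ p n' : ℝ) = R := by
    rw [hp, hn']
    simp [inner, Fin.sum_univ_three]
  have hnorm : ‖h - p‖ = R - z₀ := by
    rw [hh, hp, EuclideanSpace.norm_eq]
    simp only [WithLp.equiv_symm_apply, PiLp.toLp_apply, Fin.sum_univ_three, Matrix.cons_val_zero,
      Matrix.cons_val_one, Matrix.head_cons, Matrix.cons_val_two, Matrix.tail_cons]
    rw [show (WithLp.toLp 2 ![0, 0, z₀] - WithLp.toLp 2 ![0, 0, R] : EuclideanSpace ℝ (Fin 3)) = WithLp.toLp 2 ![0, 0, z₀ - R] by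
      apply (WithLp.equiv 2 (Fin 3 → ℝ)).injective
      ext i; fin_cases i <;> simp [WithLp.equiv_symm_apply, PiLp.toLp_apply] <;> rfl]
    simp only [WithLp.equiv_symm_apply, PiLp.toLp_apply, WithLp.ofLp_toLp, Matrix.cons_val_zero, Matrix.cons_val_one,
      Matrix.head_cons, Matrix.cons_val_two, Matrix.tail_cons]
    rw [show ‖(0:ℝ)‖ ^ 2 + ‖(0:ℝ)‖ ^ 2 + ‖z₀ - R‖ ^ 2 = (R - z₀) ^ 2 by
      simp [Real.norm_eq_abs, sq_abs]; ring]
    exact Real.sqrt_sq hRz.le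
  have hnormk : ‖h - p‖ = k ^ 2 / (2 * R) := by
    rw [hnorm, hk2']; field_simp
  refine ⟨hz₀, ?_, ?_, hnormk, ?_⟩
  · intro θ
    rw [hq θ, hn']
    simp [inner, Fin.sum_univ_three]
  · rw [hinner_p, hh, hp, hn']
    apply (WithLp.equiv 2 (Fin 3 → ℝ)).injective
    simp only [Equiv.apply_symm_apply]
    ext i
    fin_cases i <;>
      simp [WithLp.equiv_apply, WithLp.equiv_symm_apply, PiLp.toLp_apply] <;> ring
  · rw [hnormk]
    field_simp
    ring
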